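/- arXiv:0807.1387 — 6 statements merged into one kernel-verified Lean document; each statement's English description precedes it below -/
import Mathlib

section
/- Let β₀ ∈ ℝ, set θ := β₀/2 + π/4, V := (cos θ, sin θ) ∈ ℝ² and jV := (−sin θ, cos θ). Let u : ℝ² → ℝ be of class C². Then u satisfies the constant-Lagrangian-angle equation cos β₀ · (∂²u/∂t² − ∂²u/∂s²) − 2 sin β₀ · ∂²u/∂s∂t = 0 at every point (s,t) ∈ ℝ² if and only if there exist C² functions f₁, f₂ : ℝ → ℝ such that u(p) = f₁(⟨p, V⟩) + f₂(⟨p, jV⟩) for all p ∈ ℝ². -/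
noncomputable section

open Real

/-- Partial derivative of `f : ℝ² → E` in the first coordinate direction (the `s`-direction). -/
def pd1 {E : Type*} [NormedAddCommGroup E] [NormedSpace ℝ E]
    (f : ℝ × ℝ → E) (p : ℝ × ℝ) : E := fderiv ℝ f p (1, 0)

/-- Partial derivative of `f : ℝ² → E` in the second coordinate direction (the `t`-direction). -/
def pd2 {E : Type*} [NormedAddCommGroup E] [NormedSpace ℝ E]
    (f : ℝ × ℝ → E) (p : ℝ × ℝ) : E := fderiv ℝ f p (0, 1)

/-- Euclidean inner product on ℝ². -/
def dot2 (v w : ℝ × ℝ) : ℝ := v.1 * w.1 + v.2 * w.2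

/-!
With `θ = β₀/2 + π/4` the double-angle formulas turn the operator into `2 ∂_V ∂_{jV} u`, so the
equation says that the mixed second derivative of `u` along the orthonormal frame `(V, jV)`
vanishes. Integrating twice along the frame splits `u` into a function of `⟨p, V⟩` plus a function
of `⟨p, jV⟩`; conversely such a sum has vanishing mixed derivative because `⟨V, jV⟩ = 0`.
-/

section Calculus

variable {𝕜 : Type*} [RCLike 𝕜] {E G : Type*} [NormedAddCommGroup E] [NormedSpace 𝕜 E]
  [NormedAddCommGroup G] [NormedSpace 𝕜 G]

theorem apply_add_smul_eq_of_fderiv_apply_eq_zero {f : E → G} (hf : Differentiable 𝕜 f) {v : E}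
    (h : ∀ x, fderiv 𝕜 f x v = 0) (x : E) (t : 𝕜) : f (x + t • v) = f x := by
  have hline : ∀ τ : 𝕜, HasDerivAt (fun τ => f (x + τ • v)) 0 τ := fun τ => by
    simpa [h, Function.comp_def] using (hf _).hasFDerivAt.comp_hasDerivAt τ
      (((hasDerivAt_id τ).smul_const v).const_add x)
  simpa using is_const_of_deriv_eq_zero (fun τ => (hline τ).differentiableAt)
    (fun τ => (hline τ).deriv) t 0

theorem fderiv_fderiv_apply_apply {f : E → G} {x : E} (hf : DifferentiableAt 𝕜 (fderiv 𝕜 f) x)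
    (v w : E) : fderiv 𝕜 (fderiv 𝕜 f) x v w = fderiv 𝕜 (fun y => fderiv 𝕜 f y w) x v := by
  rw [fderiv_clm_apply hf (differentiableAt_const w)]
  simp

theorem apply_add_smul_add_smul_of_fderiv_fderiv_eq_zero {f : E → G} (hf : Differentiable 𝕜 f)
    (hf' : Differentiable 𝕜 (fderiv 𝕜 f)) {v w : E}
    (h : ∀ x, fderiv 𝕜 (fderiv 𝕜 f) x v w = 0) (x : E) (a b : 𝕜) :
    f (x + a • v + b • w) = f (x + a • v) + f (x + b • w) - f x := by
  -- `∂_w f` is invariant under translation along `v`, so `f (· + a • v) - f` is constant along `w`.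
  have hw : ∀ y, fderiv 𝕜 f (y + a • v) w = fderiv 𝕜 f y w := fun y =>
    apply_add_smul_eq_of_fderiv_apply_eq_zero (f := fun y => fderiv 𝕜 f y w)
      (hf'.clm_apply (differentiable_const w))
      (fun y => by rw [← fderiv_fderiv_apply_apply (hf' y), h]) y a
  have hshift : Differentiable 𝕜 fun y => f (y + a • v) :=
    hf.comp (differentiable_id.add_const _)
  have key := apply_add_smul_eq_of_fderiv_apply_eq_zero (hshift.sub hf) (v := w) (fun y => by
    rw [fderiv_sub (hshift y) (hf y), fderiv_comp_add_right]
    simp [hw]) x b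
  rw [Pi.sub_apply, Pi.sub_apply] at key
  rw [add_right_comm, add_sub_right_comm, ← key, sub_add_cancel]

theorem iteratedFDeriv_two_comp_clm_apply {g : 𝕜 → G} (hg : ContDiff 𝕜 2 g) (ℓ : E →L[𝕜] 𝕜)
    (x : E) (m : Fin 2 → E) :
    iteratedFDeriv 𝕜 2 (g ∘ ℓ) x m = (ℓ (m 0) * ℓ (m 1)) • iteratedDeriv 2 g (ℓ x) := by
  rw [ℓ.iteratedFDeriv_comp_right hg x le_rfl,
    ContinuousMultilinearMap.compContinuousLinearMap_apply,
    iteratedFDeriv_apply_eq_iteratedDeriv_mul_prod, Fin.prod_univ_two]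

theorem fderiv_fderiv_comp_add_comp_apply_eq_zero {g₁ g₂ : 𝕜 → G} (hg₁ : ContDiff 𝕜 2 g₁)
    (hg₂ : ContDiff 𝕜 2 g₂) {ℓ₁ ℓ₂ : E →L[𝕜] 𝕜} {v w : E} (hw : ℓ₁ w = 0) (hv : ℓ₂ v = 0)
    (x : E) : fderiv 𝕜 (fderiv 𝕜 (g₁ ∘ ℓ₁ + g₂ ∘ ℓ₂)) x v w = 0 := by
  have h := iteratedFDeriv_two_apply (𝕜 := 𝕜) (g₁ ∘ ℓ₁ + g₂ ∘ ℓ₂) x ![v, w]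
  rw [iteratedFDeriv_add_apply (hg₁.comp ℓ₁.contDiff).contDiffAt
    (hg₂.comp ℓ₂.contDiff).contDiffAt] at h
  simpa [iteratedFDeriv_two_comp_clm_apply, hg₁, hg₂, hv, hw] using h.symm

end Calculus

def dot2CLM (v : ℝ × ℝ) : ℝ × ℝ →L[ℝ] ℝ :=
  v.1 • ContinuousLinearMap.fst ℝ ℝ ℝ + v.2 • ContinuousLinearMap.snd ℝ ℝ ℝ

@[simp]
theorem dot2CLM_apply (v p : ℝ × ℝ) : dot2CLM v p = dot2 p v := by
  simp [dot2CLM, dot2, mul_comm]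

theorem fderiv_fderiv_apply_eq_pd {u : ℝ × ℝ → ℝ} (hu : ContDiff ℝ 2 u) (p : ℝ × ℝ)
    (a b a' b' : ℝ) :
    fderiv ℝ (fderiv ℝ u) p (a, b) (a', b')
      = a * a' * pd1 (pd1 u) p + (a * b' + b * a') * pd2 (pd1 u) p + b * b' * pd2 (pd2 u) p := by
  have hD : DifferentiableAt ℝ (fderiv ℝ u) p :=
    (hu.fderiv_right (m := 1) (by norm_num)).differentiable one_ne_zero p
  have hsymm := (hu.contDiffAt (x := p)).isSymmSndFDerivAt (by simp) (1, 0) (0, 1)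
  have e : ∀ a b : ℝ, ((a, b) : ℝ × ℝ) = a • (1, 0) + b • (0, 1) := by simp
  have h11 : pd1 (pd1 u) p = _ := (fderiv_fderiv_apply_apply hD (1, 0) (1, 0)).symm
  have h21 : pd2 (pd1 u) p = _ := (fderiv_fderiv_apply_apply hD (0, 1) (1, 0)).symm
  have h22 : pd2 (pd2 u) p = _ := (fderiv_fderiv_apply_apply hD (0, 1) (0, 1)).symm
  rw [h11, h21, h22, e a b, e a' b']
  simp only [map_add, map_smul, add_apply, smul_apply, smul_eq_mul, hsymm]
  ring

theorem constant_lagrangian_angle_eq_two_mul_fderiv_fderiv {u : ℝ × ℝ → ℝ}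
    (hu : ContDiff ℝ 2 u) (β₀ : ℝ) (p : ℝ × ℝ) :
    cos β₀ * (pd2 (pd2 u) p - pd1 (pd1 u) p) - 2 * sin β₀ * pd2 (pd1 u) p
      = 2 * fderiv ℝ (fderiv ℝ u) p (cos (β₀ / 2 + π / 4), sin (β₀ / 2 + π / 4))
          (-sin (β₀ / 2 + π / 4), cos (β₀ / 2 + π / 4)) := by
  have hcos : cos β₀ = 2 * sin (β₀ / 2 + π / 4) * cos (β₀ / 2 + π / 4) := by
    rw [← sin_two_mul, show 2 * (β₀ / 2 + π / 4) = β₀ + π / 2 by ring, sin_add_pi_div_two]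
  have hsin : sin β₀ = sin (β₀ / 2 + π / 4) ^ 2 - cos (β₀ / 2 + π / 4) ^ 2 := by
    rw [← neg_sub, ← cos_two_mul',
      show 2 * (β₀ / 2 + π / 4) = β₀ + π / 2 by ring, cos_add_pi_div_two, neg_neg]
  rw [fderiv_fderiv_apply_eq_pd hu, hcos, hsin]
  ring

theorem eq_dot2_smul_add_dot2_smul {c s : ℝ} (h : c ^ 2 + s ^ 2 = 1) (p : ℝ × ℝ) :
    p = dot2 p (c, s) • (c, s) + dot2 p (-s, c) • (-s, c) := by
  ext
  · simp only [dot2, Prod.fst_add, Prod.smul_fst, smul_eq_mul]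
    linear_combination (-p.1 * h)
  · simp only [dot2, Prod.snd_add, Prod.smul_snd, smul_eq_mul]
    linear_combination (-p.2 * h)

/-- A C² function `u` on ℝ² satisfies the constant-Lagrangian-angle equation
`cos β₀ (u_tt − u_ss) − 2 sin β₀ u_st = 0` everywhere if and only if, with
`θ := β₀/2 + π/4`, `V := (cos θ, sin θ)` and `jV := (−sin θ, cos θ)`, there are C²
functions `f₁ f₂ : ℝ → ℝ` such that `u p = f₁ ⟨p, V⟩ + f₂ ⟨p, jV⟩` for all `p`. -/
theorem constant_lagrangian_angle_classification (β₀ : ℝ) (u : ℝ × ℝ → ℝ)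
    (hu : ContDiff ℝ 2 u) :
    (∀ p : ℝ × ℝ,
        Real.cos β₀ * (pd2 (pd2 u) p - pd1 (pd1 u) p)
          - 2 * Real.sin β₀ * pd2 (pd1 u) p = 0)
      ↔ ∃ f₁ f₂ : ℝ → ℝ, ContDiff ℝ 2 f₁ ∧ ContDiff ℝ 2 f₂ ∧
          ∀ p : ℝ × ℝ,
            u p = f₁ (dot2 p (Real.cos (β₀ / 2 + π / 4), Real.sin (β₀ / 2 + π / 4)))
                + f₂ (dot2 p (-Real.sin (β₀ / 2 + π / 4), Real.cos (β₀ / 2 + π / 4))) := by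
  simp_rw [constant_lagrangian_angle_eq_two_mul_fderiv_fderiv hu, mul_eq_zero, two_ne_zero,
    false_or]
  set V : ℝ × ℝ := (cos (β₀ / 2 + π / 4), sin (β₀ / 2 + π / 4))
  set jV : ℝ × ℝ := (-sin (β₀ / 2 + π / 4), cos (β₀ / 2 + π / 4))
  have hp : ∀ p, p = dot2 p V • V + dot2 p jV • jV :=
    eq_dot2_smul_add_dot2_smul (cos_sq_add_sin_sq (β₀ / 2 + π / 4))
  constructor
  · intro h
    refine ⟨fun a => u (a • V), fun b => u (b • jV) - u 0,
      hu.comp (contDiff_id.smul contDiff_const),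
      (hu.comp (contDiff_id.smul contDiff_const)).sub contDiff_const, fun p => ?_⟩
    have := apply_add_smul_add_smul_of_fderiv_fderiv_eq_zero (hu.differentiable two_ne_zero)
      ((hu.fderiv_right (m := 1) (by norm_num)).differentiable one_ne_zero) h 0
      (dot2 p V) (dot2 p jV)
    rwa [zero_add, zero_add, ← hp, add_sub_assoc] at this
  · rintro ⟨f₁, f₂, hf₁, hf₂, hrep⟩ p
    have hu_eq : u = f₁ ∘ dot2CLM V + f₂ ∘ dot2CLM jV := funext fun q => by simp [hrep q]
    rw [hu_eq]
    exact fderiv_fderiv_comp_add_comp_apply_eq_zero hf₁ hf₂ (by simp [dot2]; ring)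
      (by simp [dot2]; ring) p
end
end

section
/- Let γ : I → ℝ² be a C³ unit-speed curve with curvature k(s) := ⟨γ″(s), jγ′(s)⟩, let a : I → ℝ be C¹, and consider the affine normal bundle X : I × ℝ → ℝ⁴, X(s,t) = (γ(s), a(s)γ′(s) + t jγ′(s)). Then the coefficients of the metric induced by 𝔾 are E := 𝔾(∂_s X, ∂_s X) = −2 a(s) k(s), F := 𝔾(∂_s X, ∂_t X) = −1, G := 𝔾(∂_t X, ∂_t X) = 0 at every point; in particular EG − F² = −1, so the induced metric is everywhere nondegenerate of Lorentzian signature. -/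
noncomputable section

open Real

/-- Rotation by `π/2`: `j(v₁,v₂) = (−v₂,v₁)`. -/
def rot2 (v : ℝ × ℝ) : ℝ × ℝ := (-v.2, v.1)

/-- The canonical symplectic form on `Tℝ² ≅ ℝ⁴ = ℝ² × ℝ²`. -/
def Om (ξ η : (ℝ × ℝ) × (ℝ × ℝ)) : ℝ := dot2 ξ.2 η.1 - dot2 ξ.1 η.2

/-- The complex structure `𝕁 = j ⊕ j` on `ℝ⁴ = ℝ² × ℝ²`. -/
def Jc (ξ : (ℝ × ℝ) × (ℝ × ℝ)) : (ℝ × ℝ) × (ℝ × ℝ) := (rot2 ξ.1, rot2 ξ.2)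

/-- The neutral pseudo-metric `𝔾(ξ,η) = Ω(𝕁ξ, η)` on `ℝ⁴`. -/
def Gm (ξ η : (ℝ × ℝ) × (ℝ × ℝ)) : ℝ := Om (Jc ξ) η

/-!
The partial derivatives of `X` are `∂ₛX = (γ', aγ'' + a'γ' + t jγ'')` and `∂ₜX = (0, jγ')`.
Since `𝔾((v, w), (v, w)) = -2⟨w, jv⟩`, `𝔾((v, w), (0, ju)) = -⟨v, u⟩` and `𝔾((0, w), (0, w)) = 0`,
the coefficients are `E = -2⟨aγ'' + a'γ' + t jγ'', jγ'⟩ = -2ak`, because `⟨γ', jγ'⟩ = 0` and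
`⟨jγ'', jγ'⟩ = ⟨γ'', γ'⟩ = 0` (differentiate `|γ'|² = 1`), `F = -|γ'|² = -1` and `G = 0`.
-/

lemma Gm_self (v w : ℝ × ℝ) : Gm (v, w) (v, w) = -2 * dot2 w (rot2 v) := by
  simp only [Gm, Om, Jc, dot2, rot2]; ring

lemma Gm_mk_zero_rot2 (v w u : ℝ × ℝ) : Gm (v, w) (0, rot2 u) = -dot2 v u := by
  simp only [Gm, Om, Jc, dot2, rot2, Prod.fst_zero, Prod.snd_zero]; ring

lemma Gm_zero_mk_self (w : ℝ × ℝ) : Gm (0, w) (0, w) = 0 := by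
  simp only [Gm, Om, Jc, dot2, rot2, Prod.fst_zero, Prod.snd_zero]; ring

lemma HasDerivAt.rot2 {f : ℝ → ℝ × ℝ} {f' : ℝ × ℝ} {x : ℝ} (hf : HasDerivAt f f' x) :
    HasDerivAt (fun u => rot2 (f u)) (rot2 f') x :=
  ((-ContinuousLinearMap.snd ℝ ℝ ℝ).prod (ContinuousLinearMap.fst ℝ ℝ ℝ)).hasFDerivAt
    |>.comp_hasDerivAt x hf

lemma HasDerivAt.dot2 {f g : ℝ → ℝ × ℝ} {f' g' : ℝ × ℝ} {x : ℝ}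
    (hf : HasDerivAt f f' x) (hg : HasDerivAt g g' x) :
    HasDerivAt (fun u => dot2 (f u) (g u)) (dot2 f' (g x) + dot2 (f x) g') x := by
  have hfst {φ : ℝ → ℝ × ℝ} {φ' : ℝ × ℝ} (hφ : HasDerivAt φ φ' x) :
      HasDerivAt (fun u => (φ u).1) φ'.1 x :=
    (ContinuousLinearMap.fst ℝ ℝ ℝ).hasFDerivAt.comp_hasDerivAt x hφ
  have hsnd {φ : ℝ → ℝ × ℝ} {φ' : ℝ × ℝ} (hφ : HasDerivAt φ φ' x) :
      HasDerivAt (fun u => (φ u).2) φ'.2 x :=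
    (ContinuousLinearMap.snd ℝ ℝ ℝ).hasFDerivAt.comp_hasDerivAt x hφ
  exact (((hfst hf).mul (hfst hg)).add ((hsnd hf).mul (hsnd hg))).congr_deriv
    (by simp only [_root_.dot2]; ring)

lemma dot2_deriv_self_eq_zero {f : ℝ → ℝ × ℝ} {f' : ℝ × ℝ} {x c : ℝ} (hf : HasDerivAt f f' x)
    (hc : ∀ᶠ u in nhds x, dot2 (f u) (f u) = c) : dot2 f' (f x) = 0 := by
  have hconst : HasDerivAt (fun u => dot2 (f u) (f u)) 0 x :=
    (hasDerivAt_const x c).congr_of_eventuallyEq hc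
  have h := (hf.dot2 hf).unique hconst
  simp only [dot2] at h ⊢
  linarith

section RuledMap

variable {F : Type*} [NormedAddCommGroup F] [NormedSpace ℝ F]

lemma pd1_eq_deriv {f : ℝ × ℝ → F} {p : ℝ × ℝ} (hf : DifferentiableAt ℝ f p) :
    pd1 f p = deriv (fun u => f (u, p.2)) p.1 := by
  have hslice : HasDerivAt (fun u : ℝ => (u, p.2)) ((1 : ℝ), (0 : ℝ)) p.1 :=
    (hasDerivAt_id p.1).prodMk (hasDerivAt_const p.1 p.2)
  exact ((hf.hasFDerivAt.comp_hasDerivAt p.1 hslice).deriv).symm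

lemma pd2_eq_deriv {f : ℝ × ℝ → F} {p : ℝ × ℝ} (hf : DifferentiableAt ℝ f p) :
    pd2 f p = deriv (fun v => f (p.1, v)) p.2 := by
  have hslice : HasDerivAt (fun v : ℝ => (p.1, v)) ((0 : ℝ), (1 : ℝ)) p.2 :=
    (hasDerivAt_const p.2 p.1).prodMk (hasDerivAt_id p.2)
  exact ((hf.hasFDerivAt.comp_hasDerivAt p.2 hslice).deriv).symm

def ruledMap (f g h : ℝ → F) (p : ℝ × ℝ) : F × F := (f p.1, g p.1 + p.2 • h p.1)

variable {f g h : ℝ → F} {s t : ℝ}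

lemma differentiableAt_ruledMap (hf : DifferentiableAt ℝ f s) (hg : DifferentiableAt ℝ g s)
    (hh : DifferentiableAt ℝ h s) : DifferentiableAt ℝ (ruledMap f g h) (s, t) := by
  have hfst {φ : ℝ → F} (hφ : DifferentiableAt ℝ φ s) :
      DifferentiableAt ℝ (fun p : ℝ × ℝ => φ p.1) (s, t) :=
    hφ.comp (s, t) differentiableAt_fst
  exact (hfst hf).prodMk ((hfst hg).add (differentiableAt_snd.smul (hfst hh)))

lemma pd1_ruledMap {f' g' h' : F} (hf : HasDerivAt f f' s) (hg : HasDerivAt g g' s)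
    (hh : HasDerivAt h h' s) : pd1 (ruledMap f g h) (s, t) = (f', g' + t • h') := by
  rw [pd1_eq_deriv (differentiableAt_ruledMap hf.differentiableAt hg.differentiableAt
    hh.differentiableAt)]
  exact (hf.prodMk (hg.add (hh.const_smul t))).deriv

lemma pd2_ruledMap (hf : DifferentiableAt ℝ f s) (hg : DifferentiableAt ℝ g s)
    (hh : DifferentiableAt ℝ h s) : pd2 (ruledMap f g h) (s, t) = (0, h s) := by
  rw [pd2_eq_deriv (differentiableAt_ruledMap hf hg hh)]
  have := (hasDerivAt_const t (f s)).prodMk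
    (((hasDerivAt_id t).smul_const (h s)).const_add (g s))
  simpa [ruledMap] using this.deriv

end RuledMap

theorem affine_normal_bundle_metric_general (I : Set ℝ) (hI : IsOpen I)
    (γ : ℝ → ℝ × ℝ) (hγ : ContDiffOn ℝ 3 γ I)
    (hunit : ∀ s ∈ I, dot2 (deriv γ s) (deriv γ s) = 1)
    (a : ℝ → ℝ) (ha : ContDiffOn ℝ 1 a I)
    (k : ℝ → ℝ) (hk : ∀ s ∈ I, k s = dot2 (deriv (deriv γ) s) (rot2 (deriv γ s)))
    (X : ℝ × ℝ → (ℝ × ℝ) × (ℝ × ℝ))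
    (hX : ∀ s t : ℝ, X (s, t) = (γ s, a s • deriv γ s + t • rot2 (deriv γ s))) :
    ∀ s ∈ I, ∀ t : ℝ,
      Gm (pd1 X (s, t)) (pd1 X (s, t)) = -2 * a s * k s ∧
      Gm (pd1 X (s, t)) (pd2 X (s, t)) = -1 ∧
      Gm (pd2 X (s, t)) (pd2 X (s, t)) = 0 ∧
      Gm (pd1 X (s, t)) (pd1 X (s, t)) * Gm (pd2 X (s, t)) (pd2 X (s, t))
        - (Gm (pd1 X (s, t)) (pd2 X (s, t))) ^ 2 = -1 := by
  intro s hs t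
  have hnhds : I ∈ nhds s := hI.mem_nhds hs
  have hγ' : HasDerivAt γ (deriv γ s) s :=
    ((hγ.differentiableOn (by norm_num)).differentiableAt hnhds).hasDerivAt
  have hγ'' : HasDerivAt (deriv γ) (deriv (deriv γ) s) s :=
    (((hγ.deriv_of_isOpen (m := 2) hI (by norm_num)).differentiableOn (by norm_num))
      |>.differentiableAt hnhds).hasDerivAt
  have ha' : HasDerivAt a (deriv a s) s :=
    ((ha.differentiableOn (by norm_num)).differentiableAt hnhds).hasDerivAt
  have horth : dot2 (deriv (deriv γ) s) (deriv γ s) = 0 :=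
    dot2_deriv_self_eq_zero hγ'' (Filter.eventually_of_mem hnhds hunit)
  obtain rfl : X = ruledMap γ (a • deriv γ) (fun u => rot2 (deriv γ u)) :=
    funext fun p => hX p.1 p.2
  rw [pd1_ruledMap hγ' (ha'.smul hγ'') hγ''.rot2, pd2_ruledMap hγ'.differentiableAt
    (ha'.smul hγ'').differentiableAt hγ''.rot2.differentiableAt]
  set w := a s • deriv (deriv γ) s + deriv a s • deriv γ s + t • rot2 (deriv (deriv γ) s)
  have hE : Gm (deriv γ s, w) (deriv γ s, w) = -2 * a s * k s := by
    rw [Gm_self, hk s hs]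
    simp only [w, dot2, rot2, Prod.fst_add, Prod.snd_add, Prod.smul_fst, Prod.smul_snd,
      smul_eq_mul] at horth ⊢
    linear_combination (-2 * t) * horth
  have hF : Gm (deriv γ s, w) (0, rot2 (deriv γ s)) = -1 := by
    rw [Gm_mk_zero_rot2, hunit s hs]
  have hG := Gm_zero_mk_self (rot2 (deriv γ s))
  refine ⟨hE, hF, hG, ?_⟩
  rw [hE, hF, hG]
  ring

/-- For the affine normal bundle `X(s,t) = (γ(s), a(s)γ′(s) + t jγ′(s))` over a C³ unit-speed
curve `γ` with curvature `k(s) = ⟨γ″(s), jγ′(s)⟩`, the induced metric coefficients are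
`E = −2 a k`, `F = −1`, `G = 0`, so `EG − F² = −1` (nondegenerate of Lorentzian signature). -/
theorem affine_normal_bundle_metric (I : Set ℝ) (hI : IsOpen I) (hI' : I.OrdConnected)
    (γ : ℝ → ℝ × ℝ) (hγ : ContDiffOn ℝ 3 γ I)
    (hunit : ∀ s ∈ I, dot2 (deriv γ s) (deriv γ s) = 1)
    (a : ℝ → ℝ) (ha : ContDiffOn ℝ 1 a I)
    (k : ℝ → ℝ) (hk : ∀ s ∈ I, k s = dot2 (deriv (deriv γ) s) (rot2 (deriv γ s)))
    (X : ℝ × ℝ → (ℝ × ℝ) × (ℝ × ℝ))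
    (hX : ∀ s t : ℝ, X (s, t) = (γ s, a s • deriv γ s + t • rot2 (deriv γ s))) :
    ∀ s ∈ I, ∀ t : ℝ,
      Gm (pd1 X (s, t)) (pd1 X (s, t)) = -2 * a s * k s ∧
      Gm (pd1 X (s, t)) (pd2 X (s, t)) = -1 ∧
      Gm (pd2 X (s, t)) (pd2 X (s, t)) = 0 ∧
      Gm (pd1 X (s, t)) (pd1 X (s, t)) * Gm (pd2 X (s, t)) (pd2 X (s, t))
        - (Gm (pd1 X (s, t)) (pd2 X (s, t))) ^ 2 = -1 :=
  affine_normal_bundle_metric_general I hI γ hγ hunit a ha k hk X hX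
end
end

section
/- Let U ⊆ ℝ² be open and u : U → ℝ of class C², and consider the gradient graph X : U → ℝ⁴, X(s,t) = ((s,t), ∇u(s,t)). Then the coefficients of the metric induced by 𝔾 are E := 𝔾(∂_s X, ∂_s X) = −2 u_{st}, F := 𝔾(∂_s X, ∂_t X) = u_{ss} − u_{tt}, G := 𝔾(∂_t X, ∂_t X) = 2 u_{st}, so that EG − F² = −(4 u_{st}² + (u_{ss} − u_{tt})²); in particular, the induced metric is degenerate at a point exactly when u_{st} = 0 and u_{ss} = u_{tt} there. -/
noncomputable section

open Real

/-!
The tangent vectors of the gradient graph are `X_s = (e₁, ∂_s ∇u)` and `X_t = (e₂, ∂_t ∇u)`.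
Evaluating `𝔾` on vectors of this shape gives `E = −2u_ts`, `F = u_ss − u_tt`, `G = 2u_st`, and
`u_ts = u_st` is the symmetry of the Hessian of a `C²` function. Then
`EG − F² = −(4u_st² + (u_ss − u_tt)²)` is minus a sum of squares, which vanishes only when both
squares do.
-/

section Partials

variable {E F : Type*} [NormedAddCommGroup E] [NormedSpace ℝ E]
  [NormedAddCommGroup F] [NormedSpace ℝ F]

theorem pd1_prodMk {f : ℝ × ℝ → E} {g : ℝ × ℝ → F} {p : ℝ × ℝ}
    (hf : DifferentiableAt ℝ f p) (hg : DifferentiableAt ℝ g p) :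
    pd1 (fun q => (f q, g q)) p = (pd1 f p, pd1 g p) := by
  simp [pd1, hf.fderiv_prodMk hg]

theorem pd2_prodMk {f : ℝ × ℝ → E} {g : ℝ × ℝ → F} {p : ℝ × ℝ}
    (hf : DifferentiableAt ℝ f p) (hg : DifferentiableAt ℝ g p) :
    pd2 (fun q => (f q, g q)) p = (pd2 f p, pd2 g p) := by
  simp [pd2, hf.fderiv_prodMk hg]

theorem pd1_fun_id (p : ℝ × ℝ) : pd1 (fun q => q) p = (1, 0) := by
  simp [pd1]

theorem pd2_fun_id (p : ℝ × ℝ) : pd2 (fun q => q) p = (0, 1) := by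
  simp [pd2]

theorem fderiv_fderiv_apply_right {f : E → F} {x : E}
    (h : DifferentiableAt ℝ (fderiv ℝ f) x) (v w : E) :
    fderiv ℝ (fun y => fderiv ℝ f y v) x w = fderiv ℝ (fderiv ℝ f) x w v := by
  simp [fderiv_clm_apply h (differentiableAt_const v)]

theorem ContDiffAt.differentiableAt_fderiv {f : E → F} {x : E} (h : ContDiffAt ℝ 2 f x) :
    DifferentiableAt ℝ (fderiv ℝ f) x :=
  (h.fderiv_right (m := 1) le_rfl).differentiableAt one_ne_zero

theorem differentiableAt_pd1 {f : ℝ × ℝ → E} {p : ℝ × ℝ}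
    (h : DifferentiableAt ℝ (fderiv ℝ f) p) : DifferentiableAt ℝ (pd1 f) p :=
  h.clm_apply (differentiableAt_const _)

theorem differentiableAt_pd2 {f : ℝ × ℝ → E} {p : ℝ × ℝ}
    (h : DifferentiableAt ℝ (fderiv ℝ f) p) : DifferentiableAt ℝ (pd2 f) p :=
  h.clm_apply (differentiableAt_const _)

theorem pd1_pd2_eq_pd2_pd1 {f : ℝ × ℝ → E} {p : ℝ × ℝ} (h : ContDiffAt ℝ 2 f p) :
    pd1 (pd2 f) p = pd2 (pd1 f) p := by
  have hd := h.differentiableAt_fderiv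
  calc pd1 (pd2 f) p = fderiv ℝ (fderiv ℝ f) p (1, 0) (0, 1) := fderiv_fderiv_apply_right hd _ _
    _ = fderiv ℝ (fderiv ℝ f) p (0, 1) (1, 0) := h.isSymmSndFDerivAt (by simp) _ _
    _ = pd2 (pd1 f) p := (fderiv_fderiv_apply_right hd _ _).symm

end Partials

section GradientGraph

variable {u : ℝ × ℝ → ℝ} {p : ℝ × ℝ}

def gradientGraph (u : ℝ × ℝ → ℝ) : ℝ × ℝ → (ℝ × ℝ) × (ℝ × ℝ) := fun q => (q, (pd1 u q, pd2 u q))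

theorem pd1_gradientGraph (h : DifferentiableAt ℝ (fderiv ℝ u) p) :
    pd1 (gradientGraph u) p = ((1, 0), (pd1 (pd1 u) p, pd1 (pd2 u) p)) := by
  have hgrad := (differentiableAt_pd1 h).prodMk (differentiableAt_pd2 h)
  unfold gradientGraph
  rw [pd1_prodMk differentiableAt_fun_id hgrad,
    pd1_prodMk (differentiableAt_pd1 h) (differentiableAt_pd2 h), pd1_fun_id]

theorem pd2_gradientGraph (h : DifferentiableAt ℝ (fderiv ℝ u) p) :
    pd2 (gradientGraph u) p = ((0, 1), (pd2 (pd1 u) p, pd2 (pd2 u) p)) := by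
  have hgrad := (differentiableAt_pd1 h).prodMk (differentiableAt_pd2 h)
  unfold gradientGraph
  rw [pd2_prodMk differentiableAt_fun_id hgrad,
    pd2_prodMk (differentiableAt_pd1 h) (differentiableAt_pd2 h), pd2_fun_id]

end GradientGraph

theorem Gm_e1_e1 (a b : ℝ) : Gm ((1, 0), (a, b)) ((1, 0), (a, b)) = -2 * b := by
  simp only [Gm, Om, Jc, rot2, dot2]; ring

theorem Gm_e1_e2 (a b c d : ℝ) : Gm ((1, 0), (a, b)) ((0, 1), (c, d)) = a - d := by
  simp only [Gm, Om, Jc, rot2, dot2]; ring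

theorem Gm_e2_e2 (c d : ℝ) : Gm ((0, 1), (c, d)) ((0, 1), (c, d)) = 2 * c := by
  simp only [Gm, Om, Jc, rot2, dot2]; ring

theorem neg_four_mul_sq_add_sq_eq_zero_iff (b c : ℝ) :
    -(4 * b ^ 2 + c ^ 2) = 0 ↔ b = 0 ∧ c = 0 := by
  constructor
  · intro h
    constructor <;> nlinarith [sq_nonneg b, sq_nonneg c]
  · rintro ⟨rfl, rfl⟩
    ring

/-- For the gradient graph `X(s,t) = ((s,t), ∇u(s,t))` of a C² function `u` on an open
`U ⊆ ℝ²`, the induced metric coefficients are `E = −2u_st`, `F = u_ss − u_tt`, `G = 2u_st`,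
so `EG − F² = −(4u_st² + (u_ss − u_tt)²)`; the metric is degenerate at a point exactly when
`u_st = 0` and `u_ss = u_tt` there. -/
theorem gradient_graph_metric (U : Set (ℝ × ℝ)) (hU : IsOpen U)
    (u : ℝ × ℝ → ℝ) (hu : ContDiffOn ℝ 2 u U) :
    ∀ p ∈ U,
      Gm (pd1 (fun q => (q, (pd1 u q, pd2 u q))) p) (pd1 (fun q => (q, (pd1 u q, pd2 u q))) p)
          = -2 * pd2 (pd1 u) p ∧
      Gm (pd1 (fun q => (q, (pd1 u q, pd2 u q))) p) (pd2 (fun q => (q, (pd1 u q, pd2 u q))) p)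
          = pd1 (pd1 u) p - pd2 (pd2 u) p ∧
      Gm (pd2 (fun q => (q, (pd1 u q, pd2 u q))) p) (pd2 (fun q => (q, (pd1 u q, pd2 u q))) p)
          = 2 * pd2 (pd1 u) p ∧
      Gm (pd1 (fun q => (q, (pd1 u q, pd2 u q))) p) (pd1 (fun q => (q, (pd1 u q, pd2 u q))) p)
          * Gm (pd2 (fun q => (q, (pd1 u q, pd2 u q))) p)
              (pd2 (fun q => (q, (pd1 u q, pd2 u q))) p)
          - (Gm (pd1 (fun q => (q, (pd1 u q, pd2 u q))) p)
              (pd2 (fun q => (q, (pd1 u q, pd2 u q))) p)) ^ 2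
          = -(4 * (pd2 (pd1 u) p) ^ 2 + (pd1 (pd1 u) p - pd2 (pd2 u) p) ^ 2) ∧
      (Gm (pd1 (fun q => (q, (pd1 u q, pd2 u q))) p) (pd1 (fun q => (q, (pd1 u q, pd2 u q))) p)
          * Gm (pd2 (fun q => (q, (pd1 u q, pd2 u q))) p)
              (pd2 (fun q => (q, (pd1 u q, pd2 u q))) p)
          - (Gm (pd1 (fun q => (q, (pd1 u q, pd2 u q))) p)
              (pd2 (fun q => (q, (pd1 u q, pd2 u q))) p)) ^ 2 = 0
        ↔ (pd2 (pd1 u) p = 0 ∧ pd1 (pd1 u) p = pd2 (pd2 u) p)) := by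
  intro p hp
  have hu2 : ContDiffAt ℝ 2 u p := hu.contDiffAt (hU.mem_nhds hp)
  have hd := hu2.differentiableAt_fderiv
  have hX : (fun q => (q, (pd1 u q, pd2 u q))) = gradientGraph u := rfl
  rw [hX, pd1_gradientGraph hd, pd2_gradientGraph hd, pd1_pd2_eq_pd2_pd1 hu2,
    Gm_e1_e1, Gm_e1_e2, Gm_e2_e2]
  have hdet : -2 * pd2 (pd1 u) p * (2 * pd2 (pd1 u) p) - (pd1 (pd1 u) p - pd2 (pd2 u) p) ^ 2
      = -(4 * pd2 (pd1 u) p ^ 2 + (pd1 (pd1 u) p - pd2 (pd2 u) p) ^ 2) := by ring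
  refine ⟨rfl, rfl, rfl, hdet, ?_⟩
  rw [hdet, neg_four_mul_sq_add_sq_eq_zero_iff, sub_eq_zero]
end
end

section
/- Let U ⊆ ℝ² be open, X : U → ℝ³ a C² map and N : U → ℝ³ a C¹ map with |N| = 1, ⟨N, ∂_s X⟩ = 0 and ⟨N, ∂_t X⟩ = 0 on U (a unit normal field). Set Y := X − ⟨X,N⟩N. Then at every point of U: (i) ⟨∂_s X, ∂_t N⟩ = ⟨∂_t X, ∂_s N⟩; and (ii) ⟨∂_s Y − ⟨∂_s Y, N⟩N, ∂_t N⟩ − ⟨∂_s N, ∂_t Y − ⟨∂_t Y, N⟩N⟩ = 0. (Identity (ii) says that the normal congruence (N, Y) of the surface X, viewed as a surface in TS², is Lagrangian for the canonical symplectic form Ω(ξ,η) = ⟨Kξ, Pη⟩ − ⟨Pξ, Kη⟩, where P is the sphere component of a tangent vector and K is the tangential projection of its fibre component.) -/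
/-!
Differentiating `⟨N, ∂_s X⟩ = 0` in `t` and `⟨N, ∂_t X⟩ = 0` in `s` and using the symmetry of
`∂_s ∂_t X` gives (i), the symmetry of the shape operator. Since `N ⊥ ∂X` and `N ⊥ ∂N`, the
tangential part of `∂Y` is `∂X − ⟨X,N⟩ ∂N`, so the symplectic form on `(∂_s, ∂_t)` equals
`⟨∂_s X, ∂_t N⟩ − ⟨∂_s N, ∂_t X⟩`, which vanishes by (i).
-/

noncomputable section

open Real

def dot3 (v w : Fin 3 → ℝ) : ℝ := v 0 * w 0 + v 1 * w 1 + v 2 * w 2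

open Filter Topology

section Bilinear

variable {E F G : Type*} [NormedAddCommGroup E] [NormedSpace ℝ E]
  [NormedAddCommGroup F] [NormedSpace ℝ F] [NormedAddCommGroup G] [NormedSpace ℝ G]
  (B : F →L[ℝ] F →L[ℝ] G)

theorem bilinear_fderiv_add_eq_zero_of_eventually_const {f g : E → F} {p : E} {c : G}
    (hf : DifferentiableAt ℝ f p) (hg : DifferentiableAt ℝ g p)
    (hc : ∀ᶠ q in 𝓝 p, B (f q) (g q) = c) (v : E) :
    B (fderiv ℝ f p v) (g p) + B (f p) (fderiv ℝ g p v) = 0 := by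
  have hderiv := B.fderiv_of_bilinear hf hg
  have hconst : (fun q => B (f q) (g q)) =ᶠ[𝓝 p] fun _ => c := hc
  rw [hconst.fderiv_eq, fderiv_fun_const] at hderiv
  simpa [add_comm] using (congrArg (· v) hderiv).symm

theorem fderiv_normal_symm {X : E → F} {N : E → F} {p : E}
    (hX : ContDiffAt ℝ 2 X p) (hN : DifferentiableAt ℝ N p) {u v : E}
    (hu : ∀ᶠ q in 𝓝 p, B (N q) (fderiv ℝ X q u) = 0)
    (hv : ∀ᶠ q in 𝓝 p, B (N q) (fderiv ℝ X q v) = 0) :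
    B (fderiv ℝ N p v) (fderiv ℝ X p u) = B (fderiv ℝ N p u) (fderiv ℝ X p v) := by
  have hDX : DifferentiableAt ℝ (fderiv ℝ X) p :=
    (hX.fderiv_right (m := 1) le_rfl).differentiableAt one_ne_zero
  have hDXu : DifferentiableAt ℝ (fun q => fderiv ℝ X q u) p := hDX.clm_apply (by fun_prop)
  have hDXv : DifferentiableAt ℝ (fun q => fderiv ℝ X q v) p := hDX.clm_apply (by fun_prop)
  have eu := bilinear_fderiv_add_eq_zero_of_eventually_const B hN hDXu hu v
  have ev := bilinear_fderiv_add_eq_zero_of_eventually_const B hN hDXv hv u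
  have hsymm := hX.isSymmSndFDerivAt (by simp [minSmoothness_of_isRCLikeNormedField]) v u
  rw [fderiv_clm_apply hDX (differentiableAt_const u)] at eu
  rw [fderiv_clm_apply hDX (differentiableAt_const v)] at ev
  simp only [ContinuousLinearMap.flip_apply, fderiv_const_apply,
    ContinuousLinearMap.comp_zero, zero_add] at eu ev
  rw [hsymm] at eu
  rw [eq_neg_of_add_eq_zero_left eu, eq_neg_of_add_eq_zero_left ev]

end Bilinear

section Dot3

theorem dot3_comm (v w : Fin 3 → ℝ) : dot3 v w = dot3 w v := by
  simp only [dot3]; ring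

theorem dot3_add_left (u v w : Fin 3 → ℝ) : dot3 (u + v) w = dot3 u w + dot3 v w := by
  simp only [dot3, Pi.add_apply]; ring

theorem dot3_add_right (u v w : Fin 3 → ℝ) : dot3 u (v + w) = dot3 u v + dot3 u w := by
  simp only [dot3, Pi.add_apply]; ring

theorem dot3_sub_left (u v w : Fin 3 → ℝ) : dot3 (u - v) w = dot3 u w - dot3 v w := by
  simp only [dot3, Pi.sub_apply]; ring

theorem dot3_sub_right (u v w : Fin 3 → ℝ) : dot3 u (v - w) = dot3 u v - dot3 u w := by
  simp only [dot3, Pi.sub_apply]; ring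

theorem dot3_smul_left (r : ℝ) (v w : Fin 3 → ℝ) : dot3 (r • v) w = r * dot3 v w := by
  simp only [dot3, Pi.smul_apply, smul_eq_mul]; ring

theorem dot3_smul_right (r : ℝ) (v w : Fin 3 → ℝ) : dot3 v (r • w) = r * dot3 v w := by
  simp only [dot3, Pi.smul_apply, smul_eq_mul]; ring

theorem isBilinearMap_dot3 : IsBilinearMap ℝ dot3 :=
  ⟨dot3_add_left, dot3_smul_left, dot3_add_right, fun r v w => dot3_smul_right r v w⟩

def dot3L : (Fin 3 → ℝ) →L[ℝ] (Fin 3 → ℝ) →L[ℝ] ℝ :=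
  isBilinearMap_dot3.toContinuousBilinearMap

@[simp]
theorem dot3L_apply (v w : Fin 3 → ℝ) : dot3L v w = dot3 v w := rfl

variable {E : Type*} [NormedAddCommGroup E] [NormedSpace ℝ E] {X N : E → Fin 3 → ℝ} {p : E}

theorem fderiv_sub_dot3_smul_apply (hX : DifferentiableAt ℝ X p) (hN : DifferentiableAt ℝ N p)
    (v : E) :
    fderiv ℝ (fun q => X q - dot3 (X q) (N q) • N q) p v =
      fderiv ℝ X p v - (dot3 (X p) (N p) • fderiv ℝ N p v
        + (dot3 (X p) (fderiv ℝ N p v) + dot3 (fderiv ℝ X p v) (N p)) • N p) := by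
  have hdot : HasFDerivAt (fun q => dot3 (X q) (N q)) _ p :=
    dot3L.hasFDerivAt_of_bilinear hX.hasFDerivAt hN.hasFDerivAt
  rw [(hX.hasFDerivAt.fun_sub (hdot.fun_smul hN.hasFDerivAt)).fderiv]
  simp

theorem tangential_fderiv_sub_dot3_smul (hX : DifferentiableAt ℝ X p)
    (hN : DifferentiableAt ℝ N p) {v : E} (hunit : dot3 (N p) (N p) = 1)
    (hNv : dot3 (fderiv ℝ N p v) (N p) = 0) (hXv : dot3 (N p) (fderiv ℝ X p v) = 0) :
    fderiv ℝ (fun q => X q - dot3 (X q) (N q) • N q) p v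
        - dot3 (fderiv ℝ (fun q => X q - dot3 (X q) (N q) • N q) p v) (N p) • N p =
      fderiv ℝ X p v - dot3 (X p) (N p) • fderiv ℝ N p v := by
  rw [dot3_comm] at hXv
  simp only [fderiv_sub_dot3_smul_apply hX hN, dot3_sub_left, dot3_add_left, dot3_smul_left,
    hunit, hNv, hXv]
  module

end Dot3

/-- For a C² surface `X : U → ℝ³` with C¹ unit normal field `N`, setting
`Y := X − ⟨X,N⟩N` (so that `(N,Y)` is the normal congruence of `X` in `TS²`), one has
(i) `⟨∂_s X, ∂_t N⟩ = ⟨∂_t X, ∂_s N⟩`, and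
(ii) `⟨∂_s Y − ⟨∂_s Y,N⟩N, ∂_t N⟩ − ⟨∂_s N, ∂_t Y − ⟨∂_t Y,N⟩N⟩ = 0`,
i.e. the normal congruence is Lagrangian for the canonical symplectic form of `TS²`. -/
theorem normal_congruence_is_lagrangian (U : Set (ℝ × ℝ)) (hU : IsOpen U)
    (X N : ℝ × ℝ → Fin 3 → ℝ)
    (hX : ContDiffOn ℝ 2 X U) (hN : ContDiffOn ℝ 1 N U)
    (hunit : ∀ p ∈ U, dot3 (N p) (N p) = 1)
    (hperp1 : ∀ p ∈ U, dot3 (N p) (pd1 X p) = 0)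
    (hperp2 : ∀ p ∈ U, dot3 (N p) (pd2 X p) = 0)
    (Y : ℝ × ℝ → Fin 3 → ℝ) (hY : ∀ q, Y q = X q - dot3 (X q) (N q) • N q) :
    (∀ p ∈ U, dot3 (pd1 X p) (pd2 N p) = dot3 (pd2 X p) (pd1 N p)) ∧
    (∀ p ∈ U,
      dot3 (pd1 Y p - dot3 (pd1 Y p) (N p) • N p) (pd2 N p)
        - dot3 (pd1 N p) (pd2 Y p - dot3 (pd2 Y p) (N p) • N p) = 0) := by
  have hXp : ∀ p ∈ U, ContDiffAt ℝ 2 X p := fun p hp => hX.contDiffAt (hU.mem_nhds hp)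
  have hNp : ∀ p ∈ U, DifferentiableAt ℝ N p := fun p hp =>
    (hN.contDiffAt (hU.mem_nhds hp)).differentiableAt one_ne_zero
  have shape : ∀ p ∈ U, dot3 (pd1 X p) (pd2 N p) = dot3 (pd2 X p) (pd1 N p) := by
    intro p hp
    rw [dot3_comm, dot3_comm (pd2 X p)]
    exact fderiv_normal_symm dot3L (hXp p hp) (hNp p hp)
      (eventually_of_mem (hU.mem_nhds hp) hperp1) (eventually_of_mem (hU.mem_nhds hp) hperp2)
  have hNN : ∀ p ∈ U, ∀ v, dot3 (fderiv ℝ N p v) (N p) = 0 := by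
    intro p hp v
    have h := bilinear_fderiv_add_eq_zero_of_eventually_const dot3L (hNp p hp) (hNp p hp)
      (eventually_of_mem (hU.mem_nhds hp) hunit) v
    rw [dot3L_apply, dot3L_apply, dot3_comm (N p)] at h
    linarith
  refine ⟨shape, fun p hp => ?_⟩
  obtain rfl : Y = fun q => X q - dot3 (X q) (N q) • N q := funext hY
  have hXd := (hXp p hp).differentiableAt two_ne_zero
  have shape_p := shape p hp
  simp only [pd1, pd2] at hperp1 hperp2 shape_p ⊢
  rw [tangential_fderiv_sub_dot3_smul hXd (hNp p hp) (hunit p hp) (hNN p hp _) (hperp1 p hp),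
    tangential_fderiv_sub_dot3_smul hXd (hNp p hp) (hunit p hp) (hNN p hp _) (hperp2 p hp)]
  simp only [dot3_sub_left, dot3_sub_right, dot3_smul_left, dot3_smul_right]
  linarith [shape_p, dot3_comm (fderiv ℝ N p (1, 0)) (fderiv ℝ X p (0, 1))]
end
end

section
/- Let U ⊆ ℝ² be open, X : U → ℝ³ a C² immersion with ⟨∂_s X, ∂_t X⟩ = 0, and N : U → ℝ³ a C¹ unit normal (|N| = 1, ⟨N,∂_s X⟩ = ⟨N,∂_t X⟩ = 0) such that the coordinates are curvature lines: ∂_s N = λ ∂_s X and ∂_t N = μ ∂_t X for functions λ, μ : U → ℝ. Set Y := X − ⟨X,N⟩N. Then the tangential projections of the fibre derivatives of the normal congruence satisfy ∂_s Y − ⟨∂_s Y, N⟩N = (1 − λ⟨X,N⟩) ∂_s X and ∂_t Y − ⟨∂_t Y, N⟩N = (1 − μ⟨X,N⟩) ∂_t X at every point of U. -/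
noncomputable section

open Real

/-! Each partial derivative of `Y` is `∂X - ⟨X,N⟩ ∂N - ∂⟨X,N⟩ N`. Along a curvature line `∂N = λ ∂X`, so this
is `(1 - λ⟨X,N⟩) ∂X` plus a multiple of `N`, and projecting orthogonally to the unit vector `N`
kills exactly the multiple of `N` because `∂X ⊥ N`. -/

/-- The map `K` of the context, at a point of `TS²` with first component `n`. -/
def tangentialPart (n w : Fin 3 → ℝ) : Fin 3 → ℝ := w - dot3 w n • n

lemma tangentialPart_smul_add_smul {v n : Fin 3 → ℝ} (hvn : dot3 n v = 0) (hn : dot3 n n = 1)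
    (a b : ℝ) : tangentialPart n (a • v + b • n) = a • v := by
  have hcoeff : dot3 (a • v + b • n) n = b := by
    simp only [dot3, Pi.add_apply, Pi.smul_apply, smul_eq_mul] at *
    linear_combination a * hvn + b * hn
  rw [tangentialPart, hcoeff, add_sub_cancel_right]

theorem DifferentiableAt.dot3 {E : Type*} [NormedAddCommGroup E] [NormedSpace ℝ E]
    {f g : E → Fin 3 → ℝ} {p : E} (hf : DifferentiableAt ℝ f p) (hg : DifferentiableAt ℝ g p) :
    DifferentiableAt ℝ (fun q => _root_.dot3 (f q) (g q)) p := by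
  have hfi := differentiableAt_pi.mp hf
  have hgi := differentiableAt_pi.mp hg
  exact (((hfi 0).mul (hgi 0)).add ((hfi 1).mul (hgi 1))).add ((hfi 2).mul (hgi 2))

lemma fderiv_sub_smul_apply {E F : Type*} [NormedAddCommGroup E] [NormedSpace ℝ E]
    [NormedAddCommGroup F] [NormedSpace ℝ F] {X N : E → F} {g : E → ℝ} {p : E}
    (hX : DifferentiableAt ℝ X p) (hg : DifferentiableAt ℝ g p) (hN : DifferentiableAt ℝ N p)
    (v : E) :
    fderiv ℝ (fun q => X q - g q • N q) p v
      = fderiv ℝ X p v - g p • fderiv ℝ N p v - fderiv ℝ g p v • N p := by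
  rw [fderiv_fun_sub hX (hg.fun_smul hN), fderiv_fun_smul hg hN]
  simp only [sub_apply, add_apply, smul_apply, ContinuousLinearMap.smulRight_apply]
  abel

lemma tangentialPart_fderiv_normalCongruence {E : Type*} [NormedAddCommGroup E]
    [NormedSpace ℝ E] {X N : E → Fin 3 → ℝ} {p v : E} {c : ℝ}
    (hX : DifferentiableAt ℝ X p) (hN : DifferentiableAt ℝ N p)
    (hunit : dot3 (N p) (N p) = 1) (hperp : dot3 (N p) (fderiv ℝ X p v) = 0)
    (hcurv : fderiv ℝ N p v = c • fderiv ℝ X p v) :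
    tangentialPart (N p) (fderiv ℝ (fun q => X q - dot3 (X q) (N q) • N q) p v)
      = (1 - c * dot3 (X p) (N p)) • fderiv ℝ X p v := by
  have hg : DifferentiableAt ℝ (fun q => dot3 (X q) (N q)) p := hX.dot3 hN
  have hdecomp : fderiv ℝ (fun q => X q - dot3 (X q) (N q) • N q) p v
      = (1 - c * dot3 (X p) (N p)) • fderiv ℝ X p v
        + (-fderiv ℝ (fun q => dot3 (X q) (N q)) p v) • N p := by
    rw [fderiv_sub_smul_apply hX hg hN, hcurv]
    module
  rw [hdecomp, tangentialPart_smul_add_smul hperp hunit]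

theorem normal_congruence_fibre_derivatives_general (U : Set (ℝ × ℝ)) (hU : IsOpen U)
    (X N : ℝ × ℝ → Fin 3 → ℝ) (lam mu : ℝ × ℝ → ℝ)
    (hX : ContDiffOn ℝ 2 X U) (hN : ContDiffOn ℝ 1 N U)
    (hunit : ∀ p ∈ U, dot3 (N p) (N p) = 1)
    (hperp1 : ∀ p ∈ U, dot3 (N p) (pd1 X p) = 0)
    (hperp2 : ∀ p ∈ U, dot3 (N p) (pd2 X p) = 0)
    (hlam : ∀ p ∈ U, pd1 N p = lam p • pd1 X p)
    (hmu : ∀ p ∈ U, pd2 N p = mu p • pd2 X p)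
    (Y : ℝ × ℝ → Fin 3 → ℝ) (hY : ∀ q, Y q = X q - dot3 (X q) (N q) • N q) :
    ∀ p ∈ U,
      pd1 Y p - dot3 (pd1 Y p) (N p) • N p
          = (1 - lam p * dot3 (X p) (N p)) • pd1 X p ∧
      pd2 Y p - dot3 (pd2 Y p) (N p) • N p
          = (1 - mu p * dot3 (X p) (N p)) • pd2 X p := by
  obtain rfl : Y = fun q => X q - dot3 (X q) (N q) • N q := funext hY
  intro p hp
  have hXp : DifferentiableAt ℝ X p :=
    (hX.contDiffAt (hU.mem_nhds hp)).differentiableAt (by norm_num)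
  have hNp : DifferentiableAt ℝ N p :=
    (hN.contDiffAt (hU.mem_nhds hp)).differentiableAt (by norm_num)
  exact ⟨tangentialPart_fderiv_normalCongruence hXp hNp (hunit p hp) (hperp1 p hp) (hlam p hp),
    tangentialPart_fderiv_normalCongruence hXp hNp (hunit p hp) (hperp2 p hp) (hmu p hp)⟩

/-- For a C² surface `X : U → ℝ³` with orthogonal curvature-line coordinates
(`∂_s N = λ ∂_s X`, `∂_t N = μ ∂_t X`) and `Y := X − ⟨X,N⟩N`, the tangential projections of
the fibre derivatives of the normal congruence are
`∂_s Y − ⟨∂_s Y,N⟩N = (1 − λ⟨X,N⟩) ∂_s X` and `∂_t Y − ⟨∂_t Y,N⟩N = (1 − μ⟨X,N⟩) ∂_t X`. -/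
theorem normal_congruence_fibre_derivatives (U : Set (ℝ × ℝ)) (hU : IsOpen U)
    (X N : ℝ × ℝ → Fin 3 → ℝ) (lam mu : ℝ × ℝ → ℝ)
    (hX : ContDiffOn ℝ 2 X U) (hN : ContDiffOn ℝ 1 N U)
    (horth : ∀ p ∈ U, dot3 (pd1 X p) (pd2 X p) = 0)
    (hunit : ∀ p ∈ U, dot3 (N p) (N p) = 1)
    (hperp1 : ∀ p ∈ U, dot3 (N p) (pd1 X p) = 0)
    (hperp2 : ∀ p ∈ U, dot3 (N p) (pd2 X p) = 0)
    (hlam : ∀ p ∈ U, pd1 N p = lam p • pd1 X p)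
    (hmu : ∀ p ∈ U, pd2 N p = mu p • pd2 X p)
    (Y : ℝ × ℝ → Fin 3 → ℝ) (hY : ∀ q, Y q = X q - dot3 (X q) (N q) • N q) :
    ∀ p ∈ U,
      pd1 Y p - dot3 (pd1 Y p) (N p) • N p
          = (1 - lam p * dot3 (X p) (N p)) • pd1 X p ∧
      pd2 Y p - dot3 (pd2 Y p) (N p) • N p
          = (1 - mu p * dot3 (X p) (N p)) • pd2 X p :=
  normal_congruence_fibre_derivatives_general U hU X N lam mu hX hN hunit hperp1 hperp2 hlam hmu Y
    hY
end
end

section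
/- Let U ⊆ ℝ² be open, X : U → ℝ³ a C² immersion with ⟨∂_s X, ∂_t X⟩ = 0, N := (∂_s X × ∂_t X)/|∂_s X × ∂_t X| its unit normal, and h : U → ℝ a C¹ function. For ε ∈ ℝ set Xᵉ := X + ε h N and Nᵉ := (∂_s Xᵉ × ∂_t Xᵉ)/|∂_s Xᵉ × ∂_t Xᵉ| (defined for ε near 0). Then at every point of U, the derivative of the Gauss map under this normal deformation is d/dε|_{ε=0} Nᵉ = −(∂_s h / |∂_s X|²) ∂_s X − (∂_t h / |∂_t X|²) ∂_t X. -/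
noncomputable section

open Real

/-- Cross product on ℝ³. -/
def cross3 (v w : Fin 3 → ℝ) : Fin 3 → ℝ :=
  ![v 1 * w 2 - v 2 * w 1, v 2 * w 0 - v 0 * w 2, v 0 * w 1 - v 1 * w 0]

/-- Euclidean norm on ℝ³. -/
def norm3 (v : Fin 3 → ℝ) : ℝ := Real.sqrt (dot3 v v)

/-- Normalization of a vector of ℝ³. -/
def unit3 (v : Fin 3 → ℝ) : Fin 3 → ℝ := (norm3 v)⁻¹ • v

/-!
Write `Ṅ` for the derivative of `Nᵉ` at `ε = 0`. Differentiating `⟨Nᵉ, ∂_s Xᵉ⟩ = 0`,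
`⟨Nᵉ, ∂_t Xᵉ⟩ = 0` and `|Nᵉ|² = 1` at `ε = 0`, and using `⟨N, ∂_s N⟩ = ⟨N, ∂_t N⟩ = 0`, gives
`⟨Ṅ, ∂_s X⟩ = -∂_s h`, `⟨Ṅ, ∂_t X⟩ = -∂_t h` and `⟨Ṅ, N⟩ = 0`. Since `∂_s X`, `∂_t X`, `N` is an
orthogonal basis of `ℝ³`, these inner products determine `Ṅ`.
-/

open scoped Matrix Topology
open Filter

theorem cross3_eq_crossProduct (v w : Fin 3 → ℝ) : cross3 v w = v ⨯₃ w := rfl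

theorem dot3_eq_dotProduct (v w : Fin 3 → ℝ) : dot3 v w = v ⬝ᵥ w := by
  simp [dot3, dotProduct, Fin.sum_univ_three]

section LinearAlgebra

variable {R : Type*} [CommRing R] [LinearOrder R] [IsStrictOrderedRing R]

theorem dotProduct_self_pos {n : Type*} [Fintype n] {v : n → R} (hv : v ≠ 0) : 0 < v ⬝ᵥ v :=
  (Finset.sum_nonneg fun i _ => mul_self_nonneg (v i)).lt_of_ne'
    (dotProduct_self_eq_zero.not.mpr hv)

theorem eq_zero_of_dotProduct_eq_zero_of_crossProduct_ne_zero {a b w : Fin 3 → R}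
    (hab : a ⨯₃ b ≠ 0) (ha : w ⬝ᵥ a = 0) (hb : w ⬝ᵥ b = 0) (hc : w ⬝ᵥ a ⨯₃ b = 0) : w = 0 := by
  have hwc : w ⨯₃ (a ⨯₃ b) = 0 := by
    rw [cross_cross_eq_smul_sub_smul', dotProduct_comm a, ha, hb, zero_smul, zero_smul, sub_zero]
  have key := cross_cross_eq_smul_sub_smul' (a ⨯₃ b) (a ⨯₃ b) w
  rw [← cross_anticomm w, hwc, neg_zero, LinearMap.map_zero, dotProduct_comm, hc, zero_smul,
    zero_sub, eq_comm, neg_eq_zero, smul_eq_zero] at key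
  exact key.resolve_left (dotProduct_self_pos hab).ne'

theorem eq_smul_add_smul_of_dotProduct_crossProduct_eq_zero {K : Type*} [Field K] [LinearOrder K]
    [IsStrictOrderedRing K] {a b d : Fin 3 → K} (hab : a ⬝ᵥ b = 0) (hc : a ⨯₃ b ≠ 0)
    (hd : d ⬝ᵥ a ⨯₃ b = 0) : d = (d ⬝ᵥ a / a ⬝ᵥ a) • a + (d ⬝ᵥ b / b ⬝ᵥ b) • b := by
  have ha : a ⬝ᵥ a ≠ 0 := (dotProduct_self_pos (by rintro rfl; simp at hc)).ne'
  have hb : b ⬝ᵥ b ≠ 0 := (dotProduct_self_pos (by rintro rfl; simp at hc)).ne'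
  refine sub_eq_zero.mp (eq_zero_of_dotProduct_eq_zero_of_crossProduct_ne_zero hc ?_ ?_ ?_)
  · simp only [sub_dotProduct, add_dotProduct, smul_dotProduct, dotProduct_comm b a, hab,
      smul_eq_mul]
    field_simp
    ring
  · simp only [sub_dotProduct, add_dotProduct, smul_dotProduct, hab, smul_eq_mul]
    field_simp
    ring
  · simp [hd, dot_self_cross, dot_cross_self]

end LinearAlgebra

section Calculus

variable {𝕜 : Type*} [NontriviallyNormedField 𝕜] {E F : Type*} [NormedAddCommGroup E]
  [NormedSpace 𝕜 E] [NormedAddCommGroup F] [NormedSpace 𝕜 F] {n : Type*} [Fintype n]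

theorem ContDiffOn.differentiableAt_fderiv_apply {f : E → F} {U : Set E} (hf : ContDiffOn 𝕜 2 f U)
    (hU : IsOpen U) {p : E} (hp : p ∈ U) (v : E) :
    DifferentiableAt 𝕜 (fun q => fderiv 𝕜 f q v) p :=
  (((hf.fderiv_of_isOpen hU (m := 1) (by norm_num)).differentiableOn one_ne_zero).differentiableAt
    (hU.mem_nhds hp)).clm_apply (differentiableAt_const v)

theorem fderiv_add_mul_smul_apply {f g : E → F} {φ : E → 𝕜} {p : E} (hf : DifferentiableAt 𝕜 f p)
    (hφ : DifferentiableAt 𝕜 φ p) (hg : DifferentiableAt 𝕜 g p) (ε : 𝕜) (v : E) :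
    fderiv 𝕜 (fun q => f q + (ε * φ q) • g q) p v
      = fderiv 𝕜 f p v + ε • (φ p • fderiv 𝕜 g p v + fderiv 𝕜 φ p v • g p) := by
  rw [HasFDerivAt.fderiv (f := fun q => f q + (ε * φ q) • g q)
    (hf.hasFDerivAt.add ((hφ.hasFDerivAt.const_mul ε).smul hg.hasFDerivAt))]
  simp only [add_apply, smul_apply, ContinuousLinearMap.smulRight_apply, smul_eq_mul]
  module

variable [CompleteSpace 𝕜] {x : E}

theorem DifferentiableAt.crossProduct {f g : E → Fin 3 → 𝕜} (hf : DifferentiableAt 𝕜 f x)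
    (hg : DifferentiableAt 𝕜 g x) : DifferentiableAt 𝕜 (fun y => f y ⨯₃ g y) x :=
  ((_root_.crossProduct (R := 𝕜)).toContinuousBilinearMap.hasFDerivAt_of_bilinear
    hf.hasFDerivAt hg.hasFDerivAt).differentiableAt

theorem DifferentiableAt.dotProduct {f g : E → n → 𝕜} (hf : DifferentiableAt 𝕜 f x)
    (hg : DifferentiableAt 𝕜 g x) : DifferentiableAt 𝕜 (fun y => f y ⬝ᵥ g y) x :=
  ((dotProductBilin 𝕜 𝕜 : (n → 𝕜) →ₗ[𝕜] (n → 𝕜) →ₗ[𝕜] 𝕜).toContinuousBilinearMap.hasFDerivAt_of_bilinear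
    hf.hasFDerivAt hg.hasFDerivAt).differentiableAt

theorem HasFDerivAt.dotProduct_add_dotProduct_eq_zero {f g : E → n → 𝕜}
    {f' g' : E →L[𝕜] n → 𝕜} (hf : HasFDerivAt f f' x) (hg : HasFDerivAt g g' x) {c : 𝕜}
    (hfg : ∀ᶠ y in 𝓝 x, f y ⬝ᵥ g y = c) (v : E) : f' v ⬝ᵥ g x + f x ⬝ᵥ g' v = 0 := by
  have hderiv := (dotProductBilin 𝕜 𝕜 : (n → 𝕜) →ₗ[𝕜] (n → 𝕜) →ₗ[𝕜] 𝕜).toContinuousBilinearMap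
    |>.hasFDerivAt_of_bilinear hf hg
  have hconst : HasFDerivAt (fun y => f y ⬝ᵥ g y) (0 : E →L[𝕜] 𝕜) x :=
    (hasFDerivAt_const c x).congr_of_eventuallyEq hfg
  simpa [add_comm] using congr($(hderiv.unique hconst) v)

theorem HasDerivAt.dotProduct_add_dotProduct_eq_zero {f g : 𝕜 → n → 𝕜} {f' g' : n → 𝕜} {t : 𝕜}
    (hf : HasDerivAt f f' t) (hg : HasDerivAt g g' t) {c : 𝕜}
    (hfg : ∀ᶠ s in 𝓝 t, f s ⬝ᵥ g s = c) : f' ⬝ᵥ g t + f t ⬝ᵥ g' = 0 := by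
  simpa using hf.hasFDerivAt.dotProduct_add_dotProduct_eq_zero hg.hasFDerivAt hfg 1

theorem HasFDerivAt.dotProduct_self_apply_eq_zero [CharZero 𝕜] {f : E → n → 𝕜}
    {f' : E →L[𝕜] n → 𝕜} (hf : HasFDerivAt f f' x) {c : 𝕜} (hff : ∀ᶠ y in 𝓝 x, f y ⬝ᵥ f y = c)
    (v : E) : f x ⬝ᵥ f' v = 0 := by
  have := hf.dotProduct_add_dotProduct_eq_zero hf hff v
  rw [dotProduct_comm, ← two_mul, mul_eq_zero] at this
  exact this.resolve_left two_ne_zero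

end Calculus

section unit3

variable {v w : Fin 3 → ℝ}

theorem norm3_eq_sqrt_dotProduct (v : Fin 3 → ℝ) : norm3 v = √(v ⬝ᵥ v) := by
  rw [norm3, dot3_eq_dotProduct]

theorem norm3_pos (hv : v ≠ 0) : 0 < norm3 v := by
  rw [norm3_eq_sqrt_dotProduct]
  exact Real.sqrt_pos.mpr (dotProduct_self_pos hv)

theorem unit3_dotProduct_self (hv : v ≠ 0) : unit3 v ⬝ᵥ unit3 v = 1 := by
  have hsq : norm3 v ^ 2 = v ⬝ᵥ v := by
    rw [norm3_eq_sqrt_dotProduct, Real.sq_sqrt (dotProduct_self_pos hv).le]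
  rw [unit3, smul_dotProduct, dotProduct_smul, ← hsq, smul_eq_mul, smul_eq_mul]
  field_simp [(norm3_pos hv).ne']

theorem unit3_dotProduct_eq_zero (h : v ⬝ᵥ w = 0) : unit3 v ⬝ᵥ w = 0 := by
  rw [unit3, smul_dotProduct, h, smul_zero]

theorem unit3_crossProduct_dotProduct_left : unit3 (v ⨯₃ w) ⬝ᵥ v = 0 :=
  unit3_dotProduct_eq_zero ((dotProduct_comm _ _).trans (dot_self_cross v w))

theorem unit3_crossProduct_dotProduct_right : unit3 (v ⨯₃ w) ⬝ᵥ w = 0 :=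
  unit3_dotProduct_eq_zero ((dotProduct_comm _ _).trans (dot_cross_self v w))

theorem dotProduct_unit3_eq_zero_iff (hv : v ≠ 0) : w ⬝ᵥ unit3 v = 0 ↔ w ⬝ᵥ v = 0 := by
  simp [unit3, dotProduct_smul, (norm3_pos hv).ne']

theorem DifferentiableAt.unit3 {E : Type*} [NormedAddCommGroup E] [NormedSpace ℝ E]
    {f : E → Fin 3 → ℝ} {x : E} (hf : DifferentiableAt ℝ f x) (h0 : f x ≠ 0) :
    DifferentiableAt ℝ (fun y => unit3 (f y)) x := by
  have hsqrt := (hf.dotProduct hf).sqrt (dotProduct_self_pos h0).ne'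
  simp only [_root_.unit3, norm3_eq_sqrt_dotProduct] at hsqrt ⊢
  exact (hsqrt.inv (by simpa [norm3_eq_sqrt_dotProduct] using (norm3_pos h0).ne')).smul hf

end unit3

theorem deriv_unit3_crossProduct_add_smul {a b a' b' : Fin 3 → ℝ} (hab : a ⬝ᵥ b = 0)
    (hc : a ⨯₃ b ≠ 0) :
    deriv (fun ε : ℝ => unit3 ((a + ε • a') ⨯₃ (b + ε • b'))) 0
      = -(unit3 (a ⨯₃ b) ⬝ᵥ a' / a ⬝ᵥ a) • a - (unit3 (a ⨯₃ b) ⬝ᵥ b' / b ⬝ᵥ b) • b := by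
  set F := fun ε : ℝ => unit3 ((a + ε • a') ⨯₃ (b + ε • b'))
  set n := unit3 (a ⨯₃ b)
  have hline : ∀ u u' : Fin 3 → ℝ, HasDerivAt (fun ε : ℝ => u + ε • u') u' 0 := fun u u' => by
    simpa using ((hasDerivAt_id (0 : ℝ)).smul_const u').const_add u
  have hcross : DifferentiableAt ℝ (fun ε : ℝ => (a + ε • a') ⨯₃ (b + ε • b')) 0 :=
    (hline a a').differentiableAt.crossProduct (hline b b').differentiableAt
  have hF : HasDerivAt F (deriv F 0) 0 := (hcross.unit3 (by simpa using hc)).hasDerivAt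
  have hF0 : F 0 = n := by simp [F, n]
  have hda : deriv F 0 ⬝ᵥ a = -(n ⬝ᵥ a') := by
    have := hF.dotProduct_add_dotProduct_eq_zero (hline a a')
      (.of_forall fun _ => unit3_crossProduct_dotProduct_left)
    simp only [hF0, zero_smul, add_zero] at this
    linarith
  have hdb : deriv F 0 ⬝ᵥ b = -(n ⬝ᵥ b') := by
    have := hF.dotProduct_add_dotProduct_eq_zero (hline b b')
      (.of_forall fun _ => unit3_crossProduct_dotProduct_right)
    simp only [hF0, zero_smul, add_zero] at this
    linarith
  have hdn : deriv F 0 ⬝ᵥ n = 0 := by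
    have := hF.dotProduct_add_dotProduct_eq_zero hF
      ((hcross.continuousAt.eventually_ne (by simpa using hc)).mono fun _ => unit3_dotProduct_self)
    rw [hF0, dotProduct_comm n] at this
    linarith
  rw [eq_smul_add_smul_of_dotProduct_crossProduct_eq_zero hab hc
    ((dotProduct_unit3_eq_zero_iff hc).mp hdn), hda, hdb, neg_div, neg_smul, sub_eq_add_neg,
    neg_div, neg_smul]

/-- For a C² immersion `X : U → ℝ³` with orthogonal coordinates and unit normal
`N = (∂_s X × ∂_t X)/|∂_s X × ∂_t X|`, and a C¹ function `h`, the Gauss map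
`Nᵉ` of the normal deformation `Xᵉ = X + ε h N` satisfies
`d/dε|₀ Nᵉ = −(∂_s h/|∂_s X|²) ∂_s X − (∂_t h/|∂_t X|²) ∂_t X`. -/
theorem gauss_map_variation (U : Set (ℝ × ℝ)) (hU : IsOpen U)
    (X N : ℝ × ℝ → Fin 3 → ℝ) (h : ℝ × ℝ → ℝ)
    (hX : ContDiffOn ℝ 2 X U) (hh : ContDiffOn ℝ 1 h U)
    (horth : ∀ p ∈ U, dot3 (pd1 X p) (pd2 X p) = 0)
    (himm : ∀ p ∈ U, cross3 (pd1 X p) (pd2 X p) ≠ 0)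
    (hN : ∀ p ∈ U, N p = unit3 (cross3 (pd1 X p) (pd2 X p))) :
    ∀ p ∈ U,
      deriv (fun ε : ℝ =>
          unit3 (cross3 (pd1 (fun q => X q + (ε * h q) • N q) p)
                        (pd2 (fun q => X q + (ε * h q) • N q) p))) 0
        = -(pd1 h p / dot3 (pd1 X p) (pd1 X p)) • pd1 X p
          - (pd2 h p / dot3 (pd2 X p) (pd2 X p)) • pd2 X p := by
  intro p hp
  have hUp : U ∈ 𝓝 p := hU.mem_nhds hp
  have hXd : DifferentiableAt ℝ X p := (hX.differentiableOn two_ne_zero).differentiableAt hUp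
  have hhd : DifferentiableAt ℝ h p := (hh.differentiableOn one_ne_zero).differentiableAt hUp
  have hN_nhds : ∀ᶠ q in 𝓝 p, N q = unit3 (pd1 X q ⨯₃ pd2 X q) := eventually_of_mem hUp hN
  have hNd : DifferentiableAt ℝ N p :=
    (((hX.differentiableAt_fderiv_apply hU hp _).crossProduct
      (hX.differentiableAt_fderiv_apply hU hp _)).unit3 (himm p hp)).congr_of_eventuallyEq hN_nhds
  have hNN : ∀ᶠ q in 𝓝 p, N q ⬝ᵥ N q = 1 :=
    eventually_of_mem hUp fun q hq => hN q hq ▸ unit3_dotProduct_self (himm q hq)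
  have hNs : N p ⬝ᵥ pd1 N p = 0 := hNd.hasFDerivAt.dotProduct_self_apply_eq_zero hNN (1, 0)
  have hNt : N p ⬝ᵥ pd2 N p = 0 := hNd.hasFDerivAt.dotProduct_self_apply_eq_zero hNN (0, 1)
  have hvar1 (ε : ℝ) : pd1 (fun q => X q + (ε * h q) • N q) p
      = pd1 X p + ε • (h p • pd1 N p + pd1 h p • N p) :=
    fderiv_add_mul_smul_apply hXd hhd hNd ε (1, 0)
  have hvar2 (ε : ℝ) : pd2 (fun q => X q + (ε * h q) • N q) p
      = pd2 X p + ε • (h p • pd2 N p + pd2 h p • N p) :=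
    fderiv_add_mul_smul_apply hXd hhd hNd ε (0, 1)
  have hab : pd1 X p ⬝ᵥ pd2 X p = 0 := dot3_eq_dotProduct _ _ ▸ horth p hp
  simp only [hvar1, hvar2, cross3_eq_crossProduct, dot3_eq_dotProduct]
  rw [deriv_unit3_crossProduct_add_smul hab (himm p hp), ← hN_nhds.self_of_nhds]
  simp [dotProduct_add, dotProduct_smul, hNs, hNt, hNN.self_of_nhds]
end
end
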